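/- arXiv:1805.11055 — 8 statements merged into one kernel-verified Lean document; each statement's English description precedes it below -/
import Mathlib

section
/- Let σ, r, η, α : [0,1] → ℝ be functions such that σ is antitone, η is continuous and positive, the product t ↦ η(t)·r(t) is antitone, and α is continuously differentiable. Assume that for all t₁, t₂ ∈ [0,1]: r(t₂)·(σ(t₁) − σ(t₂)) ≤ α(t₂) − α(t₁) ≤ r(t₁)·(σ(t₁) − σ(t₂)). Then for all 0 ≤ t₁ ≤ t₂ ≤ 1: η(t₂)·r(t₂)·(σ(t₁) − σ(t₂)) ≤ ∫_{t₁}^{t₂} η(ξ)·α'(ξ) dξ ≤ η(t₁)·r(t₁)·(σ(t₁) − σ(t₂)). -/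
open Set intervalIntegral MeasureTheory
open scoped Interval

/-! The integral `∫_a^b η α'` is additive in the interval, and by uniform continuity of `η` it
equals `η p * (α b - α a)` up to `ε * (b - a)` on every short interval `[a, b] ∋ p`. Taking
`p = a`, the support-line inequality bounds it there by `η a * r a * (σ a - σ b) + ε * (b - a)`.
Such bounds concatenate over adjacent intervals because `η r` and `σ` are antitone:
`(η r)(b) * (σ b - σ c) ≤ (η r)(a) * (σ b - σ c)`. So they hold on all of `[t₁, t₂]`, and
`ε → 0` gives the upper bound; the lower bound is the mirror image, with `p = b`. -/

theorem le_of_forall_pos_le_add_mul {a b L : ℝ} (hL : 0 ≤ L) (h : ∀ ε > 0, a ≤ b + ε * L) :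
    a ≤ b := by
  refine le_of_forall_pos_le_add fun ε hε => (h _ (div_pos hε (by linarith : 0 < L + 1))).trans ?_
  gcongr
  rw [div_mul_eq_mul_div, div_le_iff₀ (by linarith)]
  nlinarith

theorem rel_of_forall_short_of_trans {P : ℝ → ℝ → Prop} {x y δ : ℝ} (hδ : 0 < δ)
    (hshort : ∀ a b, x ≤ a → a ≤ b → b ≤ y → b - a ≤ δ → P a b)
    (htrans : ∀ a b c, x ≤ a → a ≤ b → b ≤ c → c ≤ y → P a b → P b c → P a c)
    {a b : ℝ} (hxa : x ≤ a) (hab : a ≤ b) (hby : b ≤ y) : P a b := by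
  obtain ⟨n, hn⟩ := exists_nat_gt ((b - a) / δ)
  rw [div_lt_iff₀ hδ] at hn
  induction n generalizing a with
  | zero => simp only [Nat.cast_zero, zero_mul] at hn; linarith
  | succ n ih =>
    rcases le_or_gt (b - a) δ with hle | hlong
    · exact hshort a b hxa hab hby hle
    · have hmid : P (a + δ) b := ih (by linarith) (by linarith) (by push_cast at hn; linarith)
      exact htrans a (a + δ) b hxa (by linarith) (by linarith) hby
        (hshort a (a + δ) hxa (by linarith) (by linarith) (by linarith)) hmid

section StieltjesBounds

variable {I : ℝ → ℝ → ℝ} {w σ : ℝ → ℝ} {x y : ℝ}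

theorem le_mul_sub_of_forall_short_le (hw : AntitoneOn w (Icc x y))
    (hσ : AntitoneOn σ (Icc x y))
    (hadd : ∀ a b c, x ≤ a → a ≤ b → b ≤ c → c ≤ y → I a b + I b c = I a c)
    (hloc : ∀ ε > 0, ∃ δ > 0, ∀ a b, x ≤ a → a ≤ b → b ≤ y → b - a ≤ δ →
      I a b ≤ w a * (σ a - σ b) + ε * (b - a))
    {a b : ℝ} (hxa : x ≤ a) (hab : a ≤ b) (hby : b ≤ y) :
    I a b ≤ w a * (σ a - σ b) := by
  refine le_of_forall_pos_le_add_mul (sub_nonneg.2 hab) fun ε hε => ?_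
  obtain ⟨δ, hδ, hshort⟩ := hloc ε hε
  refine rel_of_forall_short_of_trans hδ hshort (fun a b c hxa hab hbc hcy hIab hIbc => ?_)
    hxa hab hby
  have hwba : w b ≤ w a := hw ⟨hxa, hab.trans (hbc.trans hcy)⟩ ⟨hxa.trans hab, hbc.trans hcy⟩ hab
  have hσcb : σ c ≤ σ b := hσ ⟨hxa.trans hab, hbc.trans hcy⟩ ⟨(hxa.trans hab).trans hbc, hcy⟩ hbc
  have := mul_le_mul_of_nonneg_right hwba (sub_nonneg.2 hσcb)
  rw [← hadd a b c hxa hab hbc hcy]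
  linarith

theorem mul_sub_le_of_forall_short_le (hw : AntitoneOn w (Icc x y))
    (hσ : AntitoneOn σ (Icc x y))
    (hadd : ∀ a b c, x ≤ a → a ≤ b → b ≤ c → c ≤ y → I a b + I b c = I a c)
    (hloc : ∀ ε > 0, ∃ δ > 0, ∀ a b, x ≤ a → a ≤ b → b ≤ y → b - a ≤ δ →
      w b * (σ a - σ b) ≤ I a b + ε * (b - a))
    {a b : ℝ} (hxa : x ≤ a) (hab : a ≤ b) (hby : b ≤ y) :
    w b * (σ a - σ b) ≤ I a b := by
  refine le_of_forall_pos_le_add_mul (sub_nonneg.2 hab) fun ε hε => ?_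
  obtain ⟨δ, hδ, hshort⟩ := hloc ε hε
  refine rel_of_forall_short_of_trans hδ hshort (fun a b c hxa hab hbc hcy hIab hIbc => ?_)
    hxa hab hby
  have hwcb : w c ≤ w b := hw ⟨hxa.trans hab, hbc.trans hcy⟩ ⟨(hxa.trans hab).trans hbc, hcy⟩ hbc
  have hσba : σ b ≤ σ a := hσ ⟨hxa, hab.trans (hbc.trans hcy)⟩ ⟨hxa.trans hab, hbc.trans hcy⟩ hab
  have := mul_le_mul_of_nonneg_right hwcb (sub_nonneg.2 hσba)
  rw [← hadd a b c hxa hab hbc hcy]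
  linarith

end StieltjesBounds

theorem integral_eq_sub_of_hasDerivWithinAt_Icc {α α' : ℝ → ℝ} {x y a b : ℝ}
    (hα : ∀ t ∈ Icc x y, HasDerivWithinAt α (α' t) (Icc x y) t) (hα' : ContinuousOn α' (Icc x y))
    (hxa : x ≤ a) (hab : a ≤ b) (hby : b ≤ y) :
    ∫ t in a..b, α' t = α b - α a := by
  have hsub : Icc a b ⊆ Icc x y := Icc_subset_Icc hxa hby
  refine integral_eq_sub_of_hasDerivAt_of_le hab
    (fun t ht => ((hα t (hsub ht)).continuousWithinAt).mono hsub) (fun t ht => ?_)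
    ((hα'.mono hsub).intervalIntegrable_of_Icc hab)
  exact (hα t (hsub (Ioo_subset_Icc_self ht))).hasDerivAt
    (Icc_mem_nhds (hxa.trans_lt ht.1) (ht.2.trans_le hby))

theorem exists_abs_integral_mul_sub_mul_integral_le {η g : ℝ → ℝ} {x y ε : ℝ}
    (hη : ContinuousOn η (Icc x y)) (hg : ContinuousOn g (Icc x y)) (hε : 0 < ε) :
    ∃ δ > 0, ∀ a p b, x ≤ a → a ≤ p → p ≤ b → b ≤ y → b - a ≤ δ →
      |(∫ ξ in a..b, η ξ * g ξ) - η p * ∫ ξ in a..b, g ξ| ≤ ε * (b - a) := by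
  obtain ⟨M, hM⟩ := isCompact_Icc.exists_bound_of_continuousOn hg
  have hM1 : 0 < |M| + 1 := by positivity
  obtain ⟨δ, hδ, hηδ⟩ := Metric.uniformContinuousOn_iff.1
    (isCompact_Icc.uniformContinuousOn_of_continuous hη) (ε / (|M| + 1)) (div_pos hε hM1)
  refine ⟨δ / 2, half_pos hδ, fun a p b hxa hap hpb hby hba => ?_⟩
  have hab := hap.trans hpb
  have hsub : Icc a b ⊆ Icc x y := Icc_subset_Icc hxa hby
  have hp : p ∈ Icc x y := hsub ⟨hap, hpb⟩
  have hgi : IntervalIntegrable g volume a b :=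
    (hg.mono hsub).intervalIntegrable_of_Icc hab
  have hηgi : IntervalIntegrable (fun ξ => η ξ * g ξ) volume a b :=
    ((hη.mul hg).mono hsub).intervalIntegrable_of_Icc hab
  rw [← intervalIntegral.integral_const_mul, ← intervalIntegral.integral_sub hηgi (hgi.const_mul _)]
  have hbound : ∀ ξ ∈ Ι a b, ‖η ξ * g ξ - η p * g ξ‖ ≤ ε := by
    intro ξ hξ
    rw [uIoc_of_le hab] at hξ
    have hξ' : ξ ∈ Icc x y := hsub (Ioc_subset_Icc_self hξ)
    have hclose : |η ξ - η p| < ε / (|M| + 1) := by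
      rw [← Real.dist_eq]
      refine hηδ ξ hξ' p hp ?_
      rw [Real.dist_eq, abs_lt]
      constructor <;> linarith [hξ.1, hξ.2]
    have hgξ : |g ξ| ≤ |M| + 1 := ((hM ξ hξ').trans (le_abs_self M)).trans (by linarith)
    calc ‖η ξ * g ξ - η p * g ξ‖ = |η ξ - η p| * |g ξ| := by
          rw [← sub_mul, Real.norm_eq_abs, abs_mul]
      _ ≤ ε / (|M| + 1) * (|M| + 1) := by gcongr
      _ = ε := div_mul_cancel₀ ε hM1.ne'
  simpa [abs_of_nonneg (sub_nonneg.2 hab)] using norm_integral_le_of_norm_le_const hbound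

theorem exists_abs_integral_mul_deriv_sub_le {η α α' : ℝ → ℝ} {x y ε : ℝ}
    (hη : ContinuousOn η (Icc x y))
    (hα : ∀ t ∈ Icc x y, HasDerivWithinAt α (α' t) (Icc x y) t) (hα' : ContinuousOn α' (Icc x y))
    (hε : 0 < ε) :
    ∃ δ > 0, ∀ a p b, x ≤ a → a ≤ p → p ≤ b → b ≤ y → b - a ≤ δ →
      |(∫ ξ in a..b, η ξ * α' ξ) - η p * (α b - α a)| ≤ ε * (b - a) := by
  obtain ⟨δ, hδ, happrox⟩ := exists_abs_integral_mul_sub_mul_integral_le hη hα' hε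
  refine ⟨δ, hδ, fun a p b hxa hap hpb hby hba => ?_⟩
  rw [← integral_eq_sub_of_hasDerivWithinAt_Icc hα hα' hxa (hap.trans hpb) hby]
  exact happrox a p b hxa hap hpb hby hba

/-- Weighted support-line inequalities (Lemma 6 of the paper): if `σ` is antitone on `[0,1]`,
`η` is continuous and positive, `t ↦ η t * r t` is antitone, `α` is continuously
differentiable (with derivative `α'`), and the support-line inequalities
`r(t₂)·(σ(t₁) − σ(t₂)) ≤ α(t₂) − α(t₁) ≤ r(t₁)·(σ(t₁) − σ(t₂))` hold, then
`η(t₂)·r(t₂)·(σ(t₁) − σ(t₂)) ≤ ∫_{t₁}^{t₂} η·α' ≤ η(t₁)·r(t₁)·(σ(t₁) − σ(t₂))`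
for `0 ≤ t₁ ≤ t₂ ≤ 1`. -/
theorem weighted_support_line_inequalities
    (σ r η α α' : ℝ → ℝ)
    (hσ : AntitoneOn σ (Icc 0 1))
    (hηcont : ContinuousOn η (Icc 0 1))
    (hηpos : ∀ t ∈ Icc (0:ℝ) 1, 0 < η t)
    (hηr : AntitoneOn (fun t => η t * r t) (Icc 0 1))
    (hα : ∀ t ∈ Icc (0:ℝ) 1, HasDerivWithinAt α (α' t) (Icc 0 1) t)
    (hα' : ContinuousOn α' (Icc 0 1))
    (hineq : ∀ t₁ ∈ Icc (0:ℝ) 1, ∀ t₂ ∈ Icc (0:ℝ) 1,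
      r t₂ * (σ t₁ - σ t₂) ≤ α t₂ - α t₁ ∧ α t₂ - α t₁ ≤ r t₁ * (σ t₁ - σ t₂)) :
    ∀ t₁ t₂ : ℝ, 0 ≤ t₁ → t₁ ≤ t₂ → t₂ ≤ 1 →
      η t₂ * r t₂ * (σ t₁ - σ t₂) ≤ (∫ ξ in t₁..t₂, η ξ * α' ξ) ∧
      (∫ ξ in t₁..t₂, η ξ * α' ξ) ≤ η t₁ * r t₁ * (σ t₁ - σ t₂) := by
  intro t₁ t₂ ht₁ ht₁₂ ht₂
  have hint : ∀ a b, 0 ≤ a → a ≤ b → b ≤ 1 →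
      IntervalIntegrable (fun ξ => η ξ * α' ξ) volume a b := fun a b ha hab hb =>
    ((hηcont.mul hα').mono (Icc_subset_Icc ha hb)).intervalIntegrable_of_Icc hab
  have hadd : ∀ a b c : ℝ, 0 ≤ a → a ≤ b → b ≤ c → c ≤ 1 →
      (∫ ξ in a..b, η ξ * α' ξ) + (∫ ξ in b..c, η ξ * α' ξ) = ∫ ξ in a..c, η ξ * α' ξ :=
    fun a b c ha hab hbc hc => integral_add_adjacent_intervals
      (hint a b ha hab (hbc.trans hc)) (hint b c (ha.trans hab) hbc hc)
  have hloc := fun ε (hε : 0 < ε) => exists_abs_integral_mul_deriv_sub_le hηcont hα hα' hε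
  constructor
  · refine mul_sub_le_of_forall_short_le hηr hσ hadd (fun ε hε => ?_) ht₁ ht₁₂ ht₂
    obtain ⟨δ, hδ, happrox⟩ := hloc ε hε
    refine ⟨δ, hδ, fun a b ha hab hb hba => ?_⟩
    have hb' : b ∈ Icc (0:ℝ) 1 := ⟨ha.trans hab, hb⟩
    have hsupport :=
      mul_le_mul_of_nonneg_left (hineq a ⟨ha, hab.trans hb⟩ b hb').1 (hηpos b hb').le
    have := (abs_le.1 (happrox a b b ha hab le_rfl hb hba)).1
    rw [mul_assoc]
    linarith
  · refine le_mul_sub_of_forall_short_le hηr hσ hadd (fun ε hε => ?_) ht₁ ht₁₂ ht₂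
    obtain ⟨δ, hδ, happrox⟩ := hloc ε hε
    refine ⟨δ, hδ, fun a b ha hab hb hba => ?_⟩
    have ha' : a ∈ Icc (0:ℝ) 1 := ⟨ha, hab.trans hb⟩
    have hsupport :=
      mul_le_mul_of_nonneg_left (hineq a ha' b ⟨ha.trans hab, hb⟩).2 (hηpos a ha').le
    have := (abs_le.1 (happrox a a b ha le_rfl hab hb hba)).2
    rw [mul_assoc]
    linarith
end

section
/- Let R > 0, c > 0, k > 0, m > 0. Let f : [0,R] → ℝ be convex and differentiable with |f'(r)| ≤ c for all r ∈ [0,R], and assume the curvature-type bound |arctan(f'(r)) − arctan(f'(r'))| ≤ k·√(1+c²)·|r − r'| for all r, r' ∈ [0,R]. Let α : [0,1] → ℝ be differentiable with α'(t) ≥ m for all t ∈ [0,1], and let r : [0,1] → [0,R] be a function satisfying α(t) = f(r(t)) − r(t)·f'(r(t)) for all t ∈ [0,1]. Then for all 0 ≤ t₁ < t₂ ≤ 1 one has r(t₂) − r(t₁) ≤ −γ·(t₂ − t₁), where γ = m / (R·k·(1+c²)^{3/2}). -/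
/-!
The tangent intercept `g = f - x f'` of a convex `f` is antitone on `x ≥ 0`, with
`g a - g b ≤ b (f' b - f' a) ≤ R (f' b - f' a)` for `a ≤ b`. On `[-c, c]` the slope is at most
`1 + c²` times the change of tangent angle, which the curvature bound controls by
`k √(1+c²) (b - a)`; hence `g` decreases at rate at most `R k (1+c²)^{3/2}` in the abscissa. Since
`g (r t) = α t` increases at rate at least `m`, the abscissa `r t` must decrease at rate at least
`γ`.
-/

open Set Real

theorem Convex.mul_sub_le_image_sub_of_le_hasDerivWithinAt {D : Set ℝ} (hD : Convex ℝ D)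
    {f f' : ℝ → ℝ} {C : ℝ} (hf : ∀ x ∈ D, HasDerivWithinAt f (f' x) D x)
    (hf'_ge : ∀ x ∈ D, C ≤ f' x) {x y : ℝ} (hx : x ∈ D) (hy : y ∈ D) (hxy : x ≤ y) :
    C * (y - x) ≤ f y - f x := by
  have hmono : MonotoneOn (fun t => f t - C * t) D := by
    refine monotoneOn_of_hasDerivWithinAt_nonneg hD
      (fun t ht => ((hf t ht).continuousWithinAt).sub (continuousWithinAt_id.const_mul C))
      (fun t ht => ((hf t (interior_subset ht)).mono interior_subset).sub
        ((hasDerivWithinAt_id t _).const_mul C)) (fun t ht => ?_)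
    simpa using hf'_ge t (interior_subset ht)
  have := hmono hx hy hxy
  simp only at this
  linarith

theorem sub_le_one_add_sq_mul_arctan_sub {c u v : ℝ} (hu : |u| ≤ c) (hv : |v| ≤ c)
    (hvu : v ≤ u) : u - v ≤ (1 + c ^ 2) * (arctan u - arctan v) := by
  have hgrowth := (convex_Icc (-c) c).mul_sub_le_image_sub_of_le_hasDerivWithinAt
    (fun x _ => (hasDerivAt_arctan' x).hasDerivWithinAt) (C := (1 + c ^ 2)⁻¹)
    (fun x hx => inv_anti₀ (by positivity) (by nlinarith [sq_le_sq' hx.1 hx.2]))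
    (abs_le.mp hv) (abs_le.mp hu) hvu
  rwa [inv_mul_le_iff₀ (by positivity)] at hgrowth

section TangentIntercept

variable {S : Set ℝ} {f f' : ℝ → ℝ}

theorem ConvexOn.add_mul_sub_le_of_hasDerivWithinAt (hf : ConvexOn ℝ S f)
    (hf' : ∀ x ∈ S, HasDerivWithinAt f (f' x) S x) {x y : ℝ} (hx : x ∈ S) (hy : y ∈ S) :
    f x + f' x * (y - x) ≤ f y := by
  rcases lt_trichotomy x y with hxy | rfl | hyx
  · have := hf.le_slope_of_hasDerivWithinAt hx hy hxy (hf' x hx)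
    rw [slope_def_field, le_div_iff₀ (sub_pos.mpr hxy)] at this
    linarith
  · simp
  · have := hf.slope_le_of_hasDerivWithinAt hy hx hyx (hf' x hx)
    rw [slope_def_field, div_le_iff₀ (sub_pos.mpr hyx)] at this
    linarith

theorem ConvexOn.monotoneOn_of_hasDerivWithinAt (hf : ConvexOn ℝ S f)
    (hf' : ∀ x ∈ S, HasDerivWithinAt f (f' x) S x) : MonotoneOn f' S := by
  intro x hx y hy hxy
  rcases hxy.eq_or_lt with rfl | hxy
  · rfl
  · exact (hf.le_slope_of_hasDerivWithinAt hx hy hxy (hf' x hx)).trans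
      (hf.slope_le_of_hasDerivWithinAt hx hy hxy (hf' y hy))

def tangentIntercept (f f' : ℝ → ℝ) (x : ℝ) : ℝ := f x - x * f' x

theorem ConvexOn.tangentIntercept_sub_le (hf : ConvexOn ℝ S f)
    (hf' : ∀ x ∈ S, HasDerivWithinAt f (f' x) S x) {x y : ℝ} (hx : x ∈ S) (hy : y ∈ S) :
    tangentIntercept f f' x - tangentIntercept f f' y ≤ y * (f' y - f' x) := by
  have := hf.add_mul_sub_le_of_hasDerivWithinAt hf' hx hy
  unfold tangentIntercept
  linarith

theorem ConvexOn.antitoneOn_tangentIntercept (hf : ConvexOn ℝ S f)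
    (hf' : ∀ x ∈ S, HasDerivWithinAt f (f' x) S x) :
    AntitoneOn (tangentIntercept f f') (S ∩ Ici 0) := by
  intro x hx y hy hxy
  have hsupp := hf.add_mul_sub_le_of_hasDerivWithinAt hf' hy.1 hx.1
  have hmono := mul_le_mul_of_nonneg_left
    (sub_nonneg.mpr (hf.monotoneOn_of_hasDerivWithinAt hf' hx.1 hy.1 hxy)) hx.2
  unfold tangentIntercept
  linarith

end TangentIntercept

theorem mul_sqrt_self_eq_rpow_three_halves {x : ℝ} (hx : 0 ≤ x) :
    x * √x = x ^ ((3 : ℝ) / 2) := by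
  rw [sqrt_eq_rpow, show (3 : ℝ) / 2 = 1 + 1 / 2 by norm_num, rpow_add' hx (by norm_num), rpow_one]

theorem tangentIntercept_sub_le_of_arctan_lipschitz {R c k : ℝ} {f f' : ℝ → ℝ}
    (hf : ConvexOn ℝ (Icc 0 R) f) (hf' : ∀ x ∈ Icc (0:ℝ) R, HasDerivWithinAt f (f' x) (Icc 0 R) x)
    (hf'c : ∀ x ∈ Icc (0:ℝ) R, |f' x| ≤ c)
    (hcurv : ∀ x ∈ Icc (0:ℝ) R, ∀ x' ∈ Icc (0:ℝ) R,
      |arctan (f' x) - arctan (f' x')| ≤ k * √(1 + c ^ 2) * |x - x'|)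
    {a b : ℝ} (ha : a ∈ Icc 0 R) (hb : b ∈ Icc 0 R) (hab : a ≤ b) :
    tangentIntercept f f' a - tangentIntercept f f' b ≤
      R * k * (1 + c ^ 2) ^ ((3:ℝ)/2) * (b - a) := by
  have hf'le : f' a ≤ f' b := hf.monotoneOn_of_hasDerivWithinAt hf' ha hb hab
  have hslope : f' b - f' a ≤ (1 + c ^ 2) * (k * √(1 + c ^ 2) * (b - a)) := by
    refine (sub_le_one_add_sq_mul_arctan_sub (hf'c b hb) (hf'c a ha) hf'le).trans
      (mul_le_mul_of_nonneg_left ?_ (by positivity))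
    simpa [abs_of_nonneg, hab, arctan_strictMono.monotone hf'le] using hcurv b hb a ha
  calc tangentIntercept f f' a - tangentIntercept f f' b
      ≤ b * (f' b - f' a) := hf.tangentIntercept_sub_le hf' ha hb
    _ ≤ R * (f' b - f' a) := mul_le_mul_of_nonneg_right hb.2 (sub_nonneg.mpr hf'le)
    _ ≤ R * ((1 + c ^ 2) * (k * √(1 + c ^ 2) * (b - a))) :=
        mul_le_mul_of_nonneg_left hslope (hb.1.trans hb.2)
    _ = R * k * (1 + c ^ 2) ^ ((3:ℝ)/2) * (b - a) := by
        rw [← mul_sqrt_self_eq_rpow_three_halves (by positivity)]; ring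

theorem tangency_height_decreases_general
    (R c k m : ℝ) (hm : 0 < m)
    (f f' : ℝ → ℝ)
    (hconv : ConvexOn ℝ (Icc 0 R) f)
    (hderiv : ∀ x ∈ Icc (0:ℝ) R, HasDerivWithinAt f (f' x) (Icc 0 R) x)
    (hf'c : ∀ x ∈ Icc (0:ℝ) R, |f' x| ≤ c)
    (hcurv : ∀ x ∈ Icc (0:ℝ) R, ∀ x' ∈ Icc (0:ℝ) R,
      |arctan (f' x) - arctan (f' x')| ≤ k * Real.sqrt (1 + c ^ 2) * |x - x'|)
    (α α' : ℝ → ℝ)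
    (hα : ∀ t ∈ Icc (0:ℝ) 1, HasDerivWithinAt α (α' t) (Icc 0 1) t)
    (hα'm : ∀ t ∈ Icc (0:ℝ) 1, m ≤ α' t)
    (r : ℝ → ℝ) (hrR : ∀ t ∈ Icc (0:ℝ) 1, r t ∈ Icc (0:ℝ) R)
    (htangent : ∀ t ∈ Icc (0:ℝ) 1, α t = f (r t) - r t * f' (r t)) :
    ∀ t₁ t₂ : ℝ, 0 ≤ t₁ → t₁ < t₂ → t₂ ≤ 1 →
      r t₂ - r t₁ ≤ -(m / (R * k * (1 + c ^ 2) ^ ((3:ℝ)/2))) * (t₂ - t₁) := by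
  intro t₁ t₂ h₀ h₁₂ h₁
  have ht₁ : t₁ ∈ Icc (0:ℝ) 1 := ⟨h₀, by linarith⟩
  have ht₂ : t₂ ∈ Icc (0:ℝ) 1 := ⟨by linarith, h₁⟩
  have hr₁ := hrR t₁ ht₁
  have hr₂ := hrR t₂ ht₂
  have hgrowth : m * (t₂ - t₁) ≤ tangentIntercept f f' (r t₂) - tangentIntercept f f' (r t₁) := by
    have := (convex_Icc 0 1).mul_sub_le_image_sub_of_le_hasDerivWithinAt hα hα'm ht₁ ht₂ h₁₂.le
    rwa [htangent t₁ ht₁, htangent t₂ ht₂] at this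
  have hpos : 0 < m * (t₂ - t₁) := mul_pos hm (sub_pos.mpr h₁₂)
  have hlt : r t₂ < r t₁ := by
    by_contra! hle
    have := hconv.antitoneOn_tangentIntercept hderiv ⟨hr₁, hr₁.1⟩ ⟨hr₂, hr₂.1⟩ hle
    linarith
  have hrate := hgrowth.trans
    (tangentIntercept_sub_le_of_arctan_lipschitz hconv hderiv hf'c hcurv hr₂ hr₁ hlt.le)
  have hL : 0 < R * k * (1 + c ^ 2) ^ ((3:ℝ)/2) :=
    pos_of_mul_pos_left (hpos.trans_le hrate) (sub_pos.mpr hlt).le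
  rw [neg_mul, div_mul_eq_mul_div, le_neg, neg_sub, div_le_iff₀ hL]
  linarith

/-- Lemma 2 of the paper (single planar section): if the convex boundary curve (the
graph of `f`, with `|f'| ≤ c`) has curvature at most `k` (expressed by the Lipschitz
bound on the tangent angle `arctan (f' r)`), the vertex `α(t)` of the circumscribed
cone moves with speed `α' ≥ m`, and `r(t)` is the height of the tangency point (so
that the tangent line at `r(t)` has intercept `α(t)`), then `r` decreases at rate at
least `γ = m / (R·k·(1+c²)^{3/2})`. -/
theorem tangency_height_decreases
    (R c k m : ℝ) (hR : 0 < R) (hc : 0 < c) (hk : 0 < k) (hm : 0 < m)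
    (f f' : ℝ → ℝ)
    (hconv : ConvexOn ℝ (Icc 0 R) f)
    (hderiv : ∀ x ∈ Icc (0:ℝ) R, HasDerivWithinAt f (f' x) (Icc 0 R) x)
    (hf'c : ∀ x ∈ Icc (0:ℝ) R, |f' x| ≤ c)
    (hcurv : ∀ x ∈ Icc (0:ℝ) R, ∀ x' ∈ Icc (0:ℝ) R,
      |arctan (f' x) - arctan (f' x')| ≤ k * Real.sqrt (1 + c ^ 2) * |x - x'|)
    (α α' : ℝ → ℝ)
    (hα : ∀ t ∈ Icc (0:ℝ) 1, HasDerivWithinAt α (α' t) (Icc 0 1) t)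
    (hα'm : ∀ t ∈ Icc (0:ℝ) 1, m ≤ α' t)
    (r : ℝ → ℝ) (hrR : ∀ t ∈ Icc (0:ℝ) 1, r t ∈ Icc (0:ℝ) R)
    (htangent : ∀ t ∈ Icc (0:ℝ) 1, α t = f (r t) - r t * f' (r t)) :
    ∀ t₁ t₂ : ℝ, 0 ≤ t₁ → t₁ < t₂ → t₂ ≤ 1 →
      r t₂ - r t₁ ≤ -(m / (R * k * (1 + c ^ 2) ^ ((3:ℝ)/2))) * (t₂ - t₁) :=
  tangency_height_decreases_general R c k m hm f f' hconv hderiv hf'c hcurv α α' hα hα'm r hrR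
    htangent
end

section
/- Let r : [0,1] × [0,2π) → ℝ be a Lebesgue-measurable function and assume: for every τ ∈ (0,1) there exists γ > 0 such that for all φ ∈ [0,2π) and all t₁, t₂ ∈ [0,τ], |r(t₂,φ) − r(t₁,φ)| ≥ γ·|t₂ − t₁|. Define g : [0,1] × [0,2π) → ℝ² by g(t,φ) = (r(t,φ), φ). Then for every set A ⊆ ℝ² of two-dimensional Lebesgue measure zero, the set g⁻¹(A) = {(t,φ) ∈ [0,1) × [0,2π) : (r(t,φ), φ) ∈ A} has two-dimensional Lebesgue measure zero. -/
/-! For each fixed `φ`, the map `t ↦ r (t, φ)` is injective with a Lipschitz inverse on every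
`[0, τ]`, so it pulls back null sets of the line to null sets; exhausting `[0, 1)` by countably
many such intervals handles the whole fibre. Since `g` preserves the second coordinate, Fubini's
theorem (null sets of the plane are those with a.e. null horizontal sections, for measurable
sets) transports this fibrewise statement to the plane. -/

open Set MeasureTheory Real
open scoped NNReal ENNReal

theorem AntilipschitzWith.hausdorffMeasure_inter_preimage_null
    {X Y : Type*} [EMetricSpace X] [MeasurableSpace X] [BorelSpace X]
    [EMetricSpace Y] [MeasurableSpace Y] [BorelSpace Y]
    {f : X → Y} {T : Set X} {K : ℝ≥0} {d : ℝ} (hf : AntilipschitzWith K (T.domRestrict f))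
    (hd : 0 ≤ d) {N : Set Y} (hN : μH[d] N = 0) :
    μH[d] (T ∩ f ⁻¹' N) = 0 := by
  rw [← Subtype.image_preimage_coe, isometry_subtype_coe.hausdorffMeasure_image (Or.inl hd)]
  refine le_antisymm ?_ zero_le
  calc μH[d] (T.domRestrict f ⁻¹' N)
      ≤ (K : ℝ≥0∞) ^ d * μH[d] N := hf.hausdorffMeasure_preimage_le hd N
    _ = 0 := by rw [hN, mul_zero]

theorem antilipschitzWith_domRestrict_of_mul_abs_sub_le {s : ℝ → ℝ} {T : Set ℝ} {γ : ℝ}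
    (hγ : 0 < γ) (hs : ∀ t₁ ∈ T, ∀ t₂ ∈ T, γ * |t₂ - t₁| ≤ |s t₂ - s t₁|) :
    AntilipschitzWith (Real.toNNReal γ⁻¹) (T.domRestrict s) := by
  refine AntilipschitzWith.of_le_mul_dist fun t₁ t₂ => ?_
  rw [Real.coe_toNNReal _ (inv_nonneg.2 hγ.le), Subtype.dist_eq, Real.dist_eq, Real.dist_eq,
    inv_mul_eq_div, le_div_iff₀' hγ]
  exact hs t₂ t₂.2 t₁ t₁.2

theorem volume_inter_preimage_null_of_mul_abs_sub_le {s : ℝ → ℝ} {T : Set ℝ} {γ : ℝ}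
    (hγ : 0 < γ) (hs : ∀ t₁ ∈ T, ∀ t₂ ∈ T, γ * |t₂ - t₁| ≤ |s t₂ - s t₁|)
    {N : Set ℝ} (hN : volume N = 0) :
    volume (T ∩ s ⁻¹' N) = 0 := by
  rw [← hausdorffMeasure_real] at hN ⊢
  exact (antilipschitzWith_domRestrict_of_mul_abs_sub_le hγ hs).hausdorffMeasure_inter_preimage_null
    zero_le_one hN

theorem volume_Ico_inter_preimage_null {s : ℝ → ℝ} {a b : ℝ}
    (hs : ∀ τ ∈ Ioo a b, ∃ γ > (0:ℝ),
      ∀ t₁ ∈ Icc a τ, ∀ t₂ ∈ Icc a τ, γ * |t₂ - t₁| ≤ |s t₂ - s t₁|)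
    {N : Set ℝ} (hN : volume N = 0) :
    volume (Ico a b ∩ s ⁻¹' N) = 0 := by
  rcases le_or_gt b a with hba | hab
  · simp [Ico_eq_empty_of_le hba]
  obtain ⟨u, -, hu_mem, hu_lim⟩ := exists_seq_strictMono_tendsto' hab
  have hcover : Ico a b ∩ s ⁻¹' N ⊆ ⋃ n, Icc a (u n) ∩ s ⁻¹' N := by
    rintro t ⟨⟨hat, htb⟩, htN⟩
    obtain ⟨n, hn⟩ := ((tendsto_order.1 hu_lim).1 t htb).exists
    exact mem_iUnion.2 ⟨n, ⟨hat, hn.le⟩, htN⟩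
  refine measure_mono_null hcover (measure_iUnion_null fun n => ?_)
  obtain ⟨γ, hγ, hγs⟩ := hs (u n) (hu_mem n)
  exact volume_inter_preimage_null_of_mul_abs_sub_le hγ hγs hN

namespace MeasureTheory.Measure

variable {α β : Type*} [MeasurableSpace α] [MeasurableSpace β]
  {μ : Measure α} {ν : Measure β} [SFinite μ] [SFinite ν]

theorem measure_prod_null_iff_ae_null_right {s : Set (α × β)} (hs : MeasurableSet s) :
    μ.prod ν s = 0 ↔ ∀ᵐ y ∂ν, μ ((·, y) ⁻¹' s) = 0 := by
  rw [prod_apply_symm hs, lintegral_eq_zero_iff (measurable_measure_prodMk_right hs)]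
  rfl

theorem measure_prod_preimage_null_of_fiberwise {f : α × β → α} (hf : Measurable f)
    {S : Set (α × β)} (hS : MeasurableSet S)
    (hfib : ∀ᵐ y ∂ν, ∀ N : Set α, μ N = 0 →
      μ {x | (x, y) ∈ S ∧ f (x, y) ∈ N} = 0)
    {A : Set (α × β)} (hA : μ.prod ν A = 0) :
    μ.prod ν {p | p ∈ S ∧ (f p, p.2) ∈ A} = 0 := by
  obtain ⟨B, hAB, hB, hB0⟩ := exists_measurable_superset_of_null hA
  have hSB : MeasurableSet {p | p ∈ S ∧ (f p, p.2) ∈ B} :=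
    hS.inter ((hf.prodMk measurable_snd) hB)
  refine measure_mono_null (t := {p | p ∈ S ∧ (f p, p.2) ∈ B})
    (fun p hp => ⟨hp.1, hAB hp.2⟩) ?_
  rw [measure_prod_null_iff_ae_null_right hB] at hB0
  rw [measure_prod_null_iff_ae_null_right hSB]
  filter_upwards [hB0, hfib] with y hBy hy
  exact hy _ hBy

end MeasureTheory.Measure

/-- Corollary to Lemma 2 of the paper: the map `g(t,φ) = (r(t,φ), φ)`, built from a
family of functions of `t` which are uniformly expansive on every `[0,τ]`, `τ < 1`,
pulls back planar Lebesgue-null sets to Lebesgue-null sets. -/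
theorem preimage_of_null_is_null
    (r : ℝ × ℝ → ℝ) (hmeas : Measurable r)
    (hexp : ∀ τ ∈ Ioo (0:ℝ) 1, ∃ γ > (0:ℝ),
      ∀ φ ∈ Ico (0:ℝ) (2 * π), ∀ t₁ ∈ Icc (0:ℝ) τ, ∀ t₂ ∈ Icc (0:ℝ) τ,
        γ * |t₂ - t₁| ≤ |r (t₂, φ) - r (t₁, φ)|) :
    ∀ A : Set (ℝ × ℝ), volume A = 0 →
      volume {p : ℝ × ℝ | p.1 ∈ Ico (0:ℝ) 1 ∧ p.2 ∈ Ico (0:ℝ) (2 * π) ∧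
        (r p, p.2) ∈ A} = 0 := by
  intro A hA
  have hfib : ∀ φ : ℝ, ∀ N : Set ℝ, volume N = 0 →
      volume {t | (t, φ) ∈ Ico (0:ℝ) 1 ×ˢ Ico (0:ℝ) (2 * π) ∧ r (t, φ) ∈ N} = 0 := by
    intro φ N hN
    by_cases hφ : φ ∈ Ico (0:ℝ) (2 * π)
    · have hslice : volume (Ico (0:ℝ) 1 ∩ (fun t => r (t, φ)) ⁻¹' N) = 0 := by
        refine volume_Ico_inter_preimage_null (fun τ hτ => ?_) hN
        obtain ⟨γ, hγ, hγr⟩ := hexp τ hτ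
        exact ⟨γ, hγ, hγr φ hφ⟩
      refine measure_mono_null ?_ hslice
      exact fun t ht => ⟨ht.1.1, ht.2⟩
    · simp [hφ]
  have hnull := Measure.measure_prod_preimage_null_of_fiberwise hmeas
    (measurableSet_Ico.prod measurableSet_Ico) (ae_of_all _ hfib) hA
  rw [Measure.volume_eq_prod]
  simpa only [mem_prod, and_assoc] using hnull
end

section
/- Let f : ℝ × ℝ → ℝ be a function such that: (i) for every y ∈ ℝ, the map x ↦ f(x,y) is antitone; (ii) for every y ∈ ℝ, the map x ↦ f(x,y) is continuous; (iii) for every x ∈ ℝ, the map y ↦ f(x,y) is continuous. Then f is jointly continuous on ℝ × ℝ. -/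
/-- Final step of the proof of Lemma 1(a) of the paper: a function of two real
variables that is continuous in each variable separately and antitone in the first
variable is jointly continuous. -/
theorem continuous_of_separately_continuous_and_antitone
    (f : ℝ × ℝ → ℝ)
    (hanti : ∀ y : ℝ, Antitone (fun x => f (x, y)))
    (hcontx : ∀ y : ℝ, Continuous (fun x => f (x, y)))
    (hconty : ∀ x : ℝ, Continuous (fun y => f (x, y))) :
    Continuous f := by
  rw [continuous_iff_continuousAt]
  rintro ⟨a, b⟩
  rw [Metric.continuousAt_iff]
  intro ε hε
  have hε4 : 0 < ε / 4 := by linarith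
  obtain ⟨δ₁, hδ₁, h1⟩ := Metric.continuousAt_iff.mp ((hcontx b).continuousAt (x := a)) (ε / 4) hε4
  set l := a - δ₁ / 2 with hl
  set u := a + δ₁ / 2 with hu
  have hub : |f (u, b) - f (a, b)| < ε / 4 := by
    have := h1 (x := u) (by rw [Real.dist_eq, hu, abs_lt]; constructor <;> linarith)
    simpa [Real.dist_eq] using this
  have hlb : |f (l, b) - f (a, b)| < ε / 4 := by
    have := h1 (x := l) (by rw [Real.dist_eq, hl, abs_lt]; constructor <;> linarith)
    simpa [Real.dist_eq] using this
  obtain ⟨δ₂, hδ₂, h2⟩ := Metric.continuousAt_iff.mp ((hconty u).continuousAt (x := b)) (ε / 4) hε4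
  obtain ⟨δ₃, hδ₃, h3⟩ := Metric.continuousAt_iff.mp ((hconty l).continuousAt (x := b)) (ε / 4) hε4
  refine ⟨min (δ₁ / 2) (min δ₂ δ₃), by positivity, ?_⟩
  rintro ⟨x, y⟩ hxy
  rw [Prod.dist_eq] at hxy
  simp only [lt_min_iff, max_lt_iff] at hxy
  obtain ⟨⟨hx1, hy1⟩, ⟨hx2, hy2⟩, ⟨hx3, hy3⟩⟩ := hxy
  rw [Real.dist_eq] at hx1 hy2 hy3
  rw [abs_sub_lt_iff] at hx1
  have hxu : x ≤ u := by simp [hu]; linarith [hx1.1]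
  have hlx : l ≤ x := by simp [hl]; linarith [hx1.2]
  have h2' : |f (u, y) - f (u, b)| < ε / 4 := by
    have := h2 (x := y) (by rw [Real.dist_eq]; exact hy2)
    simpa [Real.dist_eq] using this
  have h3' : |f (l, y) - f (l, b)| < ε / 4 := by
    have := h3 (x := y) (by rw [Real.dist_eq]; exact hy3)
    simpa [Real.dist_eq] using this
  have hmono1 : f (u, y) ≤ f (x, y) := hanti y hxu
  have hmono2 : f (x, y) ≤ f (l, y) := hanti y hlx
  rw [Real.dist_eq]
  rw [abs_sub_lt_iff] at hub hlb h2' h3' ⊢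
  constructor <;> linarith [hub.1, hub.2, hlb.1, hlb.2, h2'.1, h2'.2, h3'.1, h3'.2]
end

section
/- Let a < b, c > 0, and let h : [a,b] → ℝ be a positive antitone function. Assume that for almost every t ∈ [a,b] (with respect to Lebesgue measure), h is differentiable at t and h'(t) ≤ −c·h(t). Then h(b) ≤ h(a)·e^{−c·(b−a)}. -/
/-!
The function `-log h` is monotone on `[a, b]` with derivative `-h'/h ≥ c` almost everywhere.
For a monotone function the integral of its a.e. derivative is at most its total increase, so
`log h(a) - log h(b) ≥ c (b - a)`.
-/

open Set MeasureTheory Real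

theorem MonotoneOn.mul_sub_le_sub_of_ae_le_deriv {f : ℝ → ℝ} {a b c : ℝ} (hab : a ≤ b)
    (hf : MonotoneOn f (Icc a b)) (hderiv : ∀ᵐ t ∂volume, t ∈ Icc a b → c ≤ deriv f t) :
    c * (b - a) ≤ f b - f a := by
  rw [← uIcc_of_le hab] at hf
  calc c * (b - a) = ∫ _ in a..b, c := by simp [mul_comm]
    _ ≤ ∫ t in a..b, deriv f t :=
        intervalIntegral.integral_mono_ae_restrict hab intervalIntegrable_const
          hf.intervalIntegrable_deriv ((ae_restrict_iff' measurableSet_Icc).2 hderiv)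
    _ ≤ f b - f a := by
        have hfab : f a ≤ f b := hf (by simp) (by simp) hab
        exact (uIcc_of_le (sub_nonneg.2 hfab) ▸ hf.intervalIntegral_deriv_mem_uIcc).2

theorem antitone_decay_of_ae_deriv_le_general
    (a b c : ℝ) (hab : a < b)
    (h : ℝ → ℝ)
    (hpos : ∀ t ∈ Icc a b, 0 < h t)
    (hanti : AntitoneOn h (Icc a b))
    (hderiv : ∀ᵐ t : ℝ ∂volume, t ∈ Icc a b →
      DifferentiableAt ℝ h t ∧ deriv h t ≤ -c * h t) :
    h b ≤ h a * Real.exp (-c * (b - a)) := by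
  have ha : a ∈ Icc a b := left_mem_Icc.2 hab.le
  have hb : b ∈ Icc a b := right_mem_Icc.2 hab.le
  have hmono : MonotoneOn (fun t => -log (h t)) (Icc a b) := fun x hx y hy hxy =>
    neg_le_neg (log_le_log (hpos y hy) (hanti hx hy hxy))
  have hlogderiv : ∀ᵐ t ∂volume, t ∈ Icc a b → c ≤ deriv (fun t => -log (h t)) t := by
    filter_upwards [hderiv] with t ht hmem
    obtain ⟨hdiff, hle⟩ := ht hmem
    have hneglog : HasDerivAt (fun t => -log (h t)) (-(deriv h t / h t)) t :=
      (hdiff.hasDerivAt.log (hpos t hmem).ne').neg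
    rwa [hneglog.deriv, le_neg, div_le_iff₀ (hpos t hmem)]
  have hlog : log (h b) ≤ log (h a) - c * (b - a) := by
    linarith [hmono.mul_sub_le_sub_of_ae_le_deriv hab.le hlogderiv]
  calc h b = exp (log (h b)) := (exp_log (hpos b hb)).symm
    _ ≤ exp (log (h a) - c * (b - a)) := exp_le_exp.2 hlog
    _ = h a * exp (-c * (b - a)) := by rw [sub_eq_add_neg, exp_add, exp_log (hpos a ha), neg_mul]

/-- Key analytic estimate in the proof of Lemma 5 of the paper: a positive antitone
function on `[a,b]` whose almost-everywhere derivative satisfies `h' ≤ −c·h` decays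
at least exponentially: `h(b) ≤ h(a)·e^{−c(b−a)}`. -/
theorem antitone_decay_of_ae_deriv_le
    (a b c : ℝ) (hab : a < b) (hc : 0 < c)
    (h : ℝ → ℝ)
    (hpos : ∀ t ∈ Icc a b, 0 < h t)
    (hanti : AntitoneOn h (Icc a b))
    (hderiv : ∀ᵐ t : ℝ ∂volume, t ∈ Icc a b →
      DifferentiableAt ℝ h t ∧ deriv h t ≤ -c * h t) :
    h b ≤ h a * Real.exp (-c * (b - a)) :=
  antitone_decay_of_ae_deriv_le_general a b c hab h hpos hanti hderiv
end

section
/- Let T > 0, γ > 0, M > 0, and c > 0 with c ≤ γ/(2M). Let ρ : [0,T] → ℝ be a positive function with ρ(t) ≤ M for all t ∈ [0,T] and ρ(t₂) − ρ(t₁) ≤ −γ·(t₂ − t₁) for all 0 ≤ t₁ ≤ t₂ ≤ T. Let χ : [0,T] → ℝ be continuously differentiable with |χ'(t)| ≤ c for all t ∈ [0,T]. Then for all 0 ≤ t₁ ≤ t₂ ≤ T: e^{χ(t₂)}·ρ(t₂) ≤ e^{−c·(t₂−t₁)}·e^{χ(t₁)}·ρ(t₁). -/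
open Set Real

/-- Core estimate of Lemma 5 of the paper (admissibility of the weight `η = e^χ`):
if `ρ` is positive, bounded by `M`, and decreases with rate at least `γ` on `[0,T]`,
and `χ` is continuously differentiable with `|χ'| ≤ c ≤ γ/(2M)`, then `e^χ·ρ`
decreases at exponential rate `c`. -/
theorem exp_weight_decay
    (T γ M c : ℝ) (hT : 0 < T) (hγ : 0 < γ) (hM : 0 < M) (hc : 0 < c)
    (hcγ : c ≤ γ / (2 * M))
    (ρ : ℝ → ℝ)
    (hρpos : ∀ t ∈ Icc (0:ℝ) T, 0 < ρ t)
    (hρM : ∀ t ∈ Icc (0:ℝ) T, ρ t ≤ M)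
    (hρdec : ∀ t₁ t₂ : ℝ, 0 ≤ t₁ → t₁ ≤ t₂ → t₂ ≤ T → ρ t₂ - ρ t₁ ≤ -γ * (t₂ - t₁))
    (χ χ' : ℝ → ℝ)
    (hχ : ∀ t ∈ Icc (0:ℝ) T, HasDerivWithinAt χ (χ' t) (Icc 0 T) t)
    (hχ'cont : ContinuousOn χ' (Icc 0 T))
    (hχ'c : ∀ t ∈ Icc (0:ℝ) T, |χ' t| ≤ c) :
    ∀ t₁ t₂ : ℝ, 0 ≤ t₁ → t₁ ≤ t₂ → t₂ ≤ T →
      Real.exp (χ t₂) * ρ t₂ ≤ Real.exp (-c * (t₂ - t₁)) * (Real.exp (χ t₁) * ρ t₁) := by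
  intro t₁ t₂ h0 h12 h2T
  have ht₁ : t₁ ∈ Icc (0:ℝ) T := ⟨h0, h12.trans h2T⟩
  have ht₂ : t₂ ∈ Icc (0:ℝ) T := ⟨h0.trans h12, h2T⟩
  have hΔ0 : (0:ℝ) ≤ t₂ - t₁ := by linarith
  -- Lipschitz bound for χ
  have hlip : ‖χ t₂ - χ t₁‖ ≤ c * ‖t₂ - t₁‖ := by
    refine (convex_Icc (0:ℝ) T).norm_image_sub_le_of_norm_hasDerivWithin_le
      (fun x hx => hχ x hx) (fun x hx => ?_) ht₁ ht₂
    simpa [Real.norm_eq_abs] using hχ'c x hx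
  have hχle : χ t₂ - χ t₁ ≤ c * (t₂ - t₁) := by
    have := (abs_le.mp (by simpa [Real.norm_eq_abs, abs_of_nonneg hΔ0] using hlip)).2
    linarith
  have hρ1 := hρpos t₁ ht₁
  have hρ2 := hρpos t₂ ht₂
  have h2cM : 2 * c * M ≤ γ := by
    rw [le_div_iff₀ (by positivity)] at hcγ; linarith
  have hkey : ρ t₂ ≤ Real.exp (-(2 * c * (t₂ - t₁))) * ρ t₁ := by
    have h1 : ρ t₂ ≤ ρ t₁ - γ * (t₂ - t₁) := by
      have := hρdec t₁ t₂ h0 h12 h2T; linarith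
    have hb := hρM t₁ ht₁
    have hnn : 0 ≤ (M - ρ t₁) * (2 * c * (t₂ - t₁)) :=
      mul_nonneg (by linarith) (by positivity)
    have h3 : ρ t₂ ≤ ρ t₁ * (1 - 2 * c * (t₂ - t₁)) := by nlinarith
    have h4 : (1 - 2 * c * (t₂ - t₁) : ℝ) ≤ Real.exp (-(2 * c * (t₂ - t₁))) := by
      have := Real.add_one_le_exp (-(2 * c * (t₂ - t₁))); linarith
    calc ρ t₂ ≤ ρ t₁ * (1 - 2 * c * (t₂ - t₁)) := h3
      _ ≤ ρ t₁ * Real.exp (-(2 * c * (t₂ - t₁))) := by nlinarith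
      _ = Real.exp (-(2 * c * (t₂ - t₁))) * ρ t₁ := mul_comm _ _
  calc Real.exp (χ t₂) * ρ t₂ ≤ Real.exp (χ t₁ + c * (t₂ - t₁)) * ρ t₂ := by
        apply mul_le_mul_of_nonneg_right _ hρ2.le
        exact Real.exp_le_exp.mpr (by linarith)
    _ ≤ Real.exp (χ t₁ + c * (t₂ - t₁)) * (Real.exp (-(2 * c * (t₂ - t₁))) * ρ t₁) :=
        mul_le_mul_of_nonneg_left hkey (Real.exp_pos _).le
    _ = Real.exp (-c * (t₂ - t₁)) * (Real.exp (χ t₁) * ρ t₁) := by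
        simp only [← mul_assoc, ← Real.exp_add]
        have h : χ t₁ + c * (t₂ - t₁) + -(2 * c * (t₂ - t₁)) = -c * (t₂ - t₁) + χ t₁ := by ring
        rw [h]
end

section
/- Let 0 < R₀ ≤ r₂ ≤ r₁, and let f : [R₀, r₁] → ℝ be convex and differentiable. Then (f(r₂) − r₂·f'(r₂)) − (f(r₁) − r₁·f'(r₁)) ≥ R₀·(arctan(f'(r₁)) − arctan(f'(r₂))) ≥ 0. -/
open Set Real

private lemma arctan_sub_le (a b : ℝ) (hab : b ≤ a) : arctan a - arctan b ≤ a - b := by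
  have hm : Monotone (fun x : ℝ => x - arctan x) := by
    have hd : ∀ x : ℝ, HasDerivAt (fun x : ℝ => x - arctan x) (1 - 1 / (1 + x ^ 2)) x :=
      fun x => (hasDerivAt_id x).sub (Real.hasDerivAt_arctan x)
    apply monotone_of_deriv_nonneg
    · exact fun x => (hd x).differentiableAt
    · intro x
      rw [(hd x).deriv]
      have h1 : 1 + x ^ 2 ≥ 1 := by nlinarith [sq_nonneg x]
      have : 1 / (1 + x ^ 2) ≤ 1 := by
        rw [div_le_one (by linarith)]; linarith
      linarith
  have := hm hab
  simp only at this
  linarith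

/-- Core estimate of Lemma 7(b) of the paper: for a convex differentiable `f` on
`[R₀, r₁]` with `0 < R₀ ≤ r₂ ≤ r₁`, the drop of the tangent-intercept function
`g(r) = f(r) − r·f'(r)` dominates `R₀` times the variation of the tangent angle:
`g(r₂) − g(r₁) ≥ R₀·(arctan f'(r₁) − arctan f'(r₂)) ≥ 0`. -/
theorem tangent_intercept_drop_controls_angle
    (R₀ r₁ r₂ : ℝ) (hR₀ : 0 < R₀) (h₂ : R₀ ≤ r₂) (h₁ : r₂ ≤ r₁)
    (f f' : ℝ → ℝ)
    (hconv : ConvexOn ℝ (Icc R₀ r₁) f)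
    (hderiv : ∀ x ∈ Icc R₀ r₁, HasDerivWithinAt f (f' x) (Icc R₀ r₁) x) :
    (f r₂ - r₂ * f' r₂) - (f r₁ - r₁ * f' r₁) ≥
      R₀ * (arctan (f' r₁) - arctan (f' r₂)) ∧
    R₀ * (arctan (f' r₁) - arctan (f' r₂)) ≥ 0 := by
  rcases eq_or_lt_of_le h₁ with heq | hlt
  · subst heq; simp
  · have hm₂ : r₂ ∈ Icc R₀ r₁ := ⟨h₂, h₁⟩
    have hm₁ : r₁ ∈ Icc R₀ r₁ := ⟨le_trans h₂ h₁, le_refl _⟩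
    have hs1 : f' r₂ ≤ slope f r₂ r₁ :=
      hconv.le_slope_of_hasDerivWithinAt hm₂ hm₁ hlt (hderiv r₂ hm₂)
    have hs2 : slope f r₂ r₁ ≤ f' r₁ :=
      hconv.slope_le_of_hasDerivWithinAt hm₂ hm₁ hlt (hderiv r₁ hm₁)
    have hd : f' r₂ ≤ f' r₁ := le_trans hs1 hs2
    have harc : arctan (f' r₂) ≤ arctan (f' r₁) := arctan_strictMono.monotone hd
    have harc2 : arctan (f' r₁) - arctan (f' r₂) ≤ f' r₁ - f' r₂ :=
      arctan_sub_le _ _ hd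
    have hslope : slope f r₂ r₁ = (f r₁ - f r₂) / (r₁ - r₂) := by
      rw [slope_def_field]
    have hne : r₁ - r₂ > 0 := by linarith
    have htan : f r₁ - f r₂ ≤ f' r₁ * (r₁ - r₂) := by
      have := hs2
      rw [hslope, div_le_iff₀ hne] at this
      linarith
    constructor
    · have key : R₀ * (arctan (f' r₁) - arctan (f' r₂)) ≤ r₂ * (f' r₁ - f' r₂) := by
        calc R₀ * (arctan (f' r₁) - arctan (f' r₂)) ≤ R₀ * (f' r₁ - f' r₂) := by
              apply mul_le_mul_of_nonneg_left harc2 hR₀.le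
          _ ≤ r₂ * (f' r₁ - f' r₂) := by
              apply mul_le_mul_of_nonneg_right h₂ (by linarith)
      nlinarith
    · have : 0 ≤ arctan (f' r₁) - arctan (f' r₂) := by linarith
      positivity
end

section
/- Let α ∈ ℝ, and in ℝ³ with standard basis vectors e₁, e₂, e₃ set v⁺ = (e₃ + α·e₁)/√(1+α²) and v⁻ = (e₃ − α·e₁)/√(1+α²). Let ν be the measure on ℝ³ given by ν = δ_{e₁} + δ_{−e₁} + δ_{e₂} + δ_{−e₂} + (√(1+α²)/2)·(δ_{v⁺} + δ_{v⁻}) + δ_{−e₃}, a finite positive combination of Dirac measures supported on the unit sphere. Then: (a) the Bochner integral of the identity with respect to ν vanishes, ∫ x dν(x) = 0; and (b) for every two-dimensional linear subspace Π ⊆ ℝ³, ν(ℝ³ ∖ Π) > 0. -/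
/-!
Opposite atoms cancel in the barycenter, and the two roof normals `v⁺, v⁻`, weighted by
`√(1+α²)/2`, add up to `e₃`, which cancels the atom at `-e₃`. A plane carrying all of `ν`
would contain the atoms `e₁`, `e₂`, `-e₃`, hence a basis of `ℝ³`.
-/

open MeasureTheory

lemma integrable_smul_dirac {X E : Type*} [MeasurableSpace X] [MeasurableSingletonClass X]
    [NormedAddCommGroup E] (f : X → E) {c : ENNReal} (hc : c ≠ ⊤) (a : X) :
    Integrable f (c • Measure.dirac a) :=
  (integrable_dirac enorm_lt_top).smul_measure hc

lemma mem_of_dirac_le_of_measure_compl_eq_zero {X : Type*} [MeasurableSpace X] {μ : Measure X}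
    {s : Set X} {x : X} (hx : Measure.dirac x ≤ μ) (hs : μ sᶜ = 0) : x ∈ s := by
  by_contra hxs
  have h := hx sᶜ
  rw [Measure.dirac_apply_of_mem hxs, hs] at h
  exact absurd h (by norm_num)

lemma div_two_smul_inv_smul_add_inv_smul_sub {K V : Type*} [Field K] [CharZero K]
    [AddCommGroup V] [Module K V] {c : K} (hc : c ≠ 0) (u v : V) :
    (c / 2) • (c⁻¹ • (u + v) + c⁻¹ • (u - v)) = u := by
  rw [← smul_add, smul_smul, add_add_sub_cancel, ← two_smul K u, smul_smul]
  field_simp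
  simp

lemma EuclideanSpace.submodule_eq_top_of_forall_single_mem {𝕜 ι : Type*} [RCLike 𝕜] [Fintype ι]
    [DecidableEq ι] {P : Submodule 𝕜 (EuclideanSpace 𝕜 ι)}
    (h : ∀ i, EuclideanSpace.single i (1 : 𝕜) ∈ P) : P = ⊤ := by
  rw [eq_top_iff, ← (EuclideanSpace.basisFun ι 𝕜).toBasis.span_eq, Submodule.span_le]
  rintro _ ⟨i, rfl⟩
  simpa using h i

/-- Alexandrov's conditions for the surface measure of the "house" body (Section 3 of
the paper): the measure `ν = δ_{e₁} + δ_{−e₁} + δ_{e₂} + δ_{−e₂}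
+ (√(1+α²)/2)(δ_{v⁺} + δ_{v⁻}) + δ_{−e₃}` has vanishing barycenter and is not
concentrated on any 2-dimensional linear subspace of `ℝ³`. -/
theorem house_measure_satisfies_alexandrov_conditions
    (α : ℝ)
    (e₁ e₂ e₃ vp vm : EuclideanSpace ℝ (Fin 3))
    (he₁ : e₁ = EuclideanSpace.single 0 1)
    (he₂ : e₂ = EuclideanSpace.single 1 1)
    (he₃ : e₃ = EuclideanSpace.single 2 1)
    (hvp : vp = (Real.sqrt (1 + α ^ 2))⁻¹ • (e₃ + α • e₁))
    (hvm : vm = (Real.sqrt (1 + α ^ 2))⁻¹ • (e₃ - α • e₁))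
    (ν : Measure (EuclideanSpace ℝ (Fin 3)))
    (hν : ν = Measure.dirac e₁ + Measure.dirac (-e₁) + Measure.dirac e₂ +
      Measure.dirac (-e₂) +
      ENNReal.ofReal (Real.sqrt (1 + α ^ 2) / 2) •
        (Measure.dirac vp + Measure.dirac vm) +
      Measure.dirac (-e₃)) :
    (∫ x, x ∂ν = 0) ∧
    (∀ P : Submodule ℝ (EuclideanSpace ℝ (Fin 3)), Module.finrank ℝ P = 2 →
      0 < ν ((P : Set (EuclideanSpace ℝ (Fin 3)))ᶜ)) := by
  refine ⟨?_, fun P hP => pos_iff_ne_zero.2 fun hPc => ?_⟩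
  · have hs : Real.sqrt (1 + α ^ 2) ≠ 0 := by positivity
    have hroof : (Real.sqrt (1 + α ^ 2) / 2) • (vp + vm) = e₃ := by
      rw [hvp, hvm, div_two_smul_inv_smul_add_inv_smul_sub hs]
    have hw : 0 ≤ Real.sqrt (1 + α ^ 2) / 2 := by positivity
    have hint : ∫ x, x ∂ν =
        (Real.sqrt (1 + α ^ 2) / 2) • vp + (Real.sqrt (1 + α ^ 2) / 2) • vm + -e₃ := by
      simp [hν, integral_add_measure, integrable_add_measure, integrable_dirac,
        integrable_smul_dirac, ENNReal.toReal_ofReal hw]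
    rw [hint, ← smul_add, hroof, add_neg_cancel]
  · have hmem : ∀ x, Measure.dirac x ≤ ν → x ∈ P := fun x hx =>
      mem_of_dirac_le_of_measure_compl_eq_zero hx hPc
    have h₁ : e₁ ∈ P := hmem _ <| by
      rw [hν]
      iterate 5 apply Measure.le_add_right
      exact le_rfl
    have h₂ : e₂ ∈ P := hmem _ <| by
      rw [hν]
      iterate 3 apply Measure.le_add_right
      exact Measure.le_add_left le_rfl
    have h₃ : e₃ ∈ P := neg_mem_iff.1 <| hmem _ <| by
      rw [hν]; exact Measure.le_add_left le_rfl
    have hP_top : P = ⊤ := EuclideanSpace.submodule_eq_top_of_forall_single_mem fun i => by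
      fin_cases i
      exacts [he₁ ▸ h₁, he₂ ▸ h₂, he₃ ▸ h₃]
    rw [hP_top, finrank_top, finrank_euclideanSpace_fin] at hP
    exact absurd hP (by norm_num)
end
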